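/- Let S ⊆ ∂𝔻 be closed and let Σ assign to each s ∈ S and k ∈ {−1,1} a unital additive semigroup Σ(s,k) ⊆ ℝ. A function f ∈ SAP(S) belongs to SAP_Σ(S) if and only if for every s ∈ S and every ε > 0 the approximating functions f_k (k ∈ {−1,1}) in the definition of semi-almost periodicity at s can be chosen so that each function x ↦ f_k(s e^{ikδe^x}), −∞ < x < 0, is the restriction of a function in AP_{Σ(s,k)}(ℝ). -/

import Mathlib

open Complex Filter Topology Set Metric
open scoped ENNReal
open scoped BoundedContinuousFunction

noncomputable section

namespace SAP

variable {B : Type*} [NormedAddCommGroup B] [NormedSpace ℂ B]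

def translateR (f : ℝ →ᵇ B) (τ : ℝ) : ℝ →ᵇ B :=
  f.compContinuous ⟨fun x => x + τ, by continuity⟩

def IsAP (f : ℝ →ᵇ B) : Prop := IsCompact (closure (Set.range (translateR f)))

def meanValueR (g : ℝ → B) : B :=
  haveI : Nonempty B := ⟨0⟩
  limUnder atTop (fun T : ℝ => (2 * T)⁻¹ • ∫ x in (-T)..T, g x)

def bohrCoeffR (g : ℝ → B) (lam : ℝ) : B :=
  meanValueR (fun x => Complex.exp (-(Complex.I * lam * x)) • g x)

def apSpec (g : ℝ → B) : Set ℝ := {lam | bohrCoeffR g lam ≠ 0}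

def IsUnitalSemigroup (Γ : Set ℝ) : Prop :=
  (0 : ℝ) ∈ Γ ∧ ∀ a ∈ Γ, ∀ b ∈ Γ, a + b ∈ Γ

def circleSet : Set ℂ := {z | ‖z‖ = 1}

def arcPt (s : circleSet) (k t : ℝ) : circleSet :=
  ⟨(s : ℂ) * Complex.exp (Complex.I * (k * t)), by
    have hs : ‖(s : ℂ)‖ = 1 := s.2
    show ‖_‖ = 1
    rw [norm_mul, hs, one_mul, Complex.norm_exp]
    simp [Complex.mul_re]⟩

def IsSAP (f : circleSet → B) : Prop :=
  ∀ s : circleSet, ∀ ε : ℝ, 0 < ε → ∃ δ : ℝ, δ ∈ Set.Ioo (0 : ℝ) Real.pi ∧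
    ∃ g₁ g₂ : ℝ →ᵇ B, IsAP g₁ ∧ IsAP g₂ ∧
      (∀ x : ℝ, x < 0 → ‖f (arcPt s (-1) (δ * Real.exp x)) - g₁ x‖ < ε) ∧
      (∀ x : ℝ, x < 0 → ‖f (arcPt s 1 (δ * Real.exp x)) - g₂ x‖ < ε)

/-- the Bohr-Fourier coefficient `a_λ^k(f,s)` of a semi-almost periodic function over a
point `s` of the circle (here `M_s^k` is computed along the sequences `aₙ = -2n`, `bₙ = -n`) -/
def circBohr (f : circleSet → B) (s : circleSet) (k lam : ℝ) : B :=
  haveI : Nonempty B := ⟨0⟩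
  limUnder atTop (fun T : ℝ => T⁻¹ •
    ∫ t in (-2 * T)..(-T), Complex.exp (-(Complex.I * lam * t)) • f (arcPt s k (Real.exp t)))

/-- the spectrum `spec_s^k(f)` -/
def sapSpec (f : circleSet → B) (s : circleSet) (k : ℝ) : Set ℝ :=
  {lam | circBohr f s k lam ≠ 0}

abbrev LinfT : Type := ↥(lp (fun _ : circleSet => ℂ) ∞)

end SAP

/-!
Fix `s` and a side `k`, and let `φ(t) = f(s e^{ik e^t})`, so that the Bohr–Fourier coefficients of
`f` over `s` are limits of means of `e^{-iλt} φ(t)` over `[-2T, -T]`. Semi-almost periodicity says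
that `φ` can be approximated near `t = -∞` by almost periodic functions to any accuracy. An almost
periodic function that is small near `-∞` is small everywhere (almost periods move every point
arbitrarily far to the left), so these approximants converge uniformly to one almost periodic `h`
with `φ - h → 0` at `-∞`. The means of `φ` over `[-2T, -T]` are then asymptotic to those of `h`,
which converge to the Bohr mean of `h` because means of an almost periodic function over long
windows do not depend on where the window sits. Hence `spec_s^k(f) = spec(h)`.

If `spec(h) ⊆ Σ(s,k)`, translates of `h` are the required approximants. Conversely, an approximant
`g` with spectrum in `Σ(s,k)` is uniformly close to `h`, so for `λ ∉ Σ(s,k)` the coefficient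
`a_λ(h)` is within any `ε` of `a_λ(g) = 0`.

For the integrals to mean anything, `φ` has to be measurable: near every point it is, on either
side, uniformly close to a continuous function, which forces it to be continuous off a countable
set.
-/

namespace SAP

open BoundedContinuousFunction MeasureTheory

variable {B : Type*} [NormedAddCommGroup B]

section Translate

@[simp] lemma translateR_apply (u : ℝ →ᵇ B) (τ x : ℝ) : translateR u τ x = u (x + τ) := rfl

@[simp] lemma translateR_zero (u : ℝ →ᵇ B) : translateR u 0 = u := by
  ext x; simp

lemma translateR_translateR (u : ℝ →ᵇ B) (σ τ : ℝ) :
    translateR (translateR u σ) τ = translateR u (τ + σ) := by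
  ext x; simp [add_assoc]

lemma dist_translateR_le (u v : ℝ →ᵇ B) (τ : ℝ) :
    dist (translateR u τ) (translateR v τ) ≤ dist u v :=
  (dist_le dist_nonneg).2 fun x => dist_coe_le_dist (x + τ)

lemma dist_translateR (u v : ℝ →ᵇ B) (τ : ℝ) :
    dist (translateR u τ) (translateR v τ) = dist u v := by
  refine le_antisymm (dist_translateR_le u v τ) ?_
  simpa [translateR_translateR] using dist_translateR_le (translateR u τ) (translateR v τ) (-τ)

lemma dist_translateR_translateR (u : ℝ →ᵇ B) (σ τ : ℝ) :
    dist (translateR u σ) (translateR u τ) = dist (translateR u (σ - τ)) u := by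
  rw [← dist_translateR _ _ (-τ), translateR_translateR, translateR_translateR]
  simp [sub_eq_neg_add]

end Translate

section Closure

lemma IsAP.of_forall_mem {u : ℝ →ᵇ B} {K : Set (ℝ →ᵇ B)} (hK : IsCompact K)
    (h : ∀ τ, translateR u τ ∈ K) : IsAP u :=
  hK.of_isClosed_subset isClosed_closure (closure_minimal (range_subset_iff.2 h) hK.isClosed)

lemma translateR_mem_closure {u : ℝ →ᵇ B} (τ : ℝ) :
    translateR u τ ∈ closure (range (translateR u)) :=
  subset_closure (mem_range_self τ)

lemma IsAP.sub {u v : ℝ →ᵇ B} (hu : IsAP u) (hv : IsAP v) : IsAP (u - v) :=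
  .of_forall_mem ((hu.prod hv).image continuous_sub) fun τ =>
    ⟨(translateR u τ, translateR v τ), ⟨translateR_mem_closure τ, translateR_mem_closure τ⟩,
      by ext; simp⟩

lemma IsAP.translate {u : ℝ →ᵇ B} (hu : IsAP u) (c : ℝ) : IsAP (translateR u c) :=
  .of_forall_mem hu fun τ => translateR_translateR u c τ ▸ translateR_mem_closure _

lemma IsAP.of_tendsto [CompleteSpace B] {g : ℕ → ℝ →ᵇ B} {h : ℝ →ᵇ B} (hg : ∀ n, IsAP (g n))
    (hlim : Tendsto g atTop (𝓝 h)) : IsAP h := by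
  refine (TotallyBounded.closure ?_).isCompact_of_isClosed isClosed_closure
  refine Metric.totallyBounded_iff.2 fun ε hε => ?_
  obtain ⟨n, hn⟩ := ((Metric.tendsto_nhds.1 hlim) (ε / 2) (half_pos hε)).exists
  obtain ⟨t, htf, hcover⟩ := Metric.totallyBounded_iff.1
    ((hg n).totallyBounded.subset subset_closure) (ε / 2) (half_pos hε)
  refine ⟨t, htf, ?_⟩
  rintro _ ⟨τ, rfl⟩
  obtain ⟨y, hy, hτy⟩ := mem_iUnion₂.1 (hcover (mem_range_self τ))
  refine mem_iUnion₂.2 ⟨y, hy, ?_⟩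
  calc dist (translateR h τ) y
      ≤ dist (translateR h τ) (translateR (g n) τ) + dist (translateR (g n) τ) y :=
        dist_triangle _ _ _
    _ < ε / 2 + ε / 2 := by
        rw [dist_translateR, dist_comm]
        exact add_lt_add hn (mem_ball.1 hτy)
    _ = ε := add_halves ε

end Closure

section AlmostPeriods

lemma IsAP.exists_almostPeriod {u : ℝ →ᵇ B} (hu : IsAP u) {ε : ℝ} (hε : 0 < ε) :
    ∃ L, ∀ a, ∃ τ ∈ Icc a (a + L), dist (translateR u τ) u < ε := by
  obtain ⟨t, ht⟩ := hu.elim_finite_subcover (fun τ => ball (translateR u τ) ε)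
    (fun _ => isOpen_ball) fun v hv => by
      obtain ⟨_, ⟨τ, rfl⟩, hτ⟩ := Metric.mem_closure_iff.1 hv ε hε
      exact mem_iUnion.2 ⟨τ, mem_ball.2 hτ⟩
  set M := ∑ σ ∈ t, |σ|
  refine ⟨2 * M, fun a => ?_⟩
  obtain ⟨σ, hσt, hσ⟩ := mem_iUnion₂.1 (ht (translateR_mem_closure (a + M)))
  have hσM : |σ| ≤ M := Finset.single_le_sum (fun σ _ => abs_nonneg σ) hσt
  refine ⟨a + M - σ, ⟨by linarith [le_abs_self σ], by linarith [neg_abs_le σ]⟩, ?_⟩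
  rwa [← dist_translateR_translateR]

/-- Every point can be moved arbitrarily far to the left by an almost period. -/
lemma IsAP.norm_le_of_eventually {w : ℝ →ᵇ B} (hw : IsAP w) {M : ℝ}
    (h : ∀ᶠ t in atBot, ‖w t‖ ≤ M) : ‖w‖ ≤ M := by
  obtain ⟨d, hd⟩ := eventually_atBot.1 h
  refine norm_le_of_nonempty.2 fun x => le_of_forall_pos_le_add fun ε hε => ?_
  obtain ⟨L, hL⟩ := hw.exists_almostPeriod hε
  obtain ⟨τ, hτ, hτw⟩ := hL (d - x - L)
  have hshift : ‖w x - w (x + τ)‖ ≤ ε := by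
    rw [← dist_eq_norm, dist_comm, ← translateR_apply]
    exact (dist_coe_le_dist x).trans hτw.le
  calc ‖w x‖ ≤ ‖w (x + τ)‖ + ‖w x - w (x + τ)‖ := norm_le_norm_add_norm_sub' _ _
    _ ≤ M + ε := add_le_add (hd _ (by linarith [hτ.2])) hshift

lemma IsAP.dist_le_of_eventually {u v : ℝ →ᵇ B} (hu : IsAP u) (hv : IsAP v) {M : ℝ}
    (h : ∀ᶠ t in atBot, dist (u t) (v t) ≤ M) : dist u v ≤ M := by
  rw [dist_eq_norm]
  exact (hu.sub hv).norm_le_of_eventually (by simpa [dist_eq_norm] using h)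

/-- The approximants form a Cauchy sequence, since two of them that are close near `-∞` are
close everywhere. -/
theorem exists_isAP_tendsto_dist_atBot [CompleteSpace B] {φ : ℝ → B}
    (hφ : ∀ ε > 0, ∃ g : ℝ →ᵇ B, IsAP g ∧ ∀ᶠ t in atBot, dist (φ t) (g t) ≤ ε) :
    ∃ h : ℝ →ᵇ B, IsAP h ∧ Tendsto (fun t => dist (φ t) (h t)) atBot (𝓝 0) := by
  choose g hg hφg using fun n : ℕ => hφ (1 / 2 ^ n) (by positivity)
  have hstep : ∀ n, dist (g n) (g (n + 1)) ≤ 4 / 2 / 2 ^ n := fun n => by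
    refine (hg n).dist_le_of_eventually (hg (n + 1)) ?_
    filter_upwards [hφg n, hφg (n + 1)] with t h₁ h₂
    calc dist (g n t) (g (n + 1) t) ≤ 1 / 2 ^ n + 1 / 2 ^ (n + 1) :=
          (dist_triangle_left _ _ (φ t)).trans (add_le_add h₁ h₂)
      _ ≤ 4 / 2 / 2 ^ n := by rw [pow_succ]; field_simp; norm_num
  obtain ⟨h, hlim⟩ := cauchySeq_tendsto_of_complete (cauchySeq_of_le_geometric_two hstep)
  refine ⟨h, .of_tendsto hg hlim, tendsto_order.2 ⟨fun a ha => .of_forall fun t =>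
    ha.trans_le dist_nonneg, fun ε hε => ?_⟩⟩
  obtain ⟨n, hn⟩ := exists_pow_lt_of_lt_one (show 0 < ε / 5 by positivity)
    (show (1 / 2 : ℝ) < 1 by norm_num)
  have hgh := dist_le_of_le_geometric_two_of_tendsto hstep hlim n
  filter_upwards [hφg n] with t ht
  calc dist (φ t) (h t) ≤ dist (φ t) (g n t) + dist (g n t) (h t) := dist_triangle _ _ _
    _ ≤ 1 / 2 ^ n + 4 / 2 ^ n := add_le_add ht ((dist_coe_le_dist t).trans hgh)
    _ = 5 * (1 / 2) ^ n := by rw [div_pow, one_pow]; ring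
    _ < ε := by linarith

end AlmostPeriods

section WindowMean

variable [NormedSpace ℂ B]

def windowMean (g : ℝ → B) (a ℓ : ℝ) : B := ℓ⁻¹ • ∫ x in a..a + ℓ, g x

lemma windowMean_const [CompleteSpace B] (c : B) (a : ℝ) {ℓ : ℝ} (hℓ : ℓ ≠ 0) :
    windowMean (fun _ => c) a ℓ = c := by
  simp [windowMean, smul_smul, hℓ]

lemma windowMean_const_smul (c : ℂ) (g : ℝ → B) (a ℓ : ℝ) :
    windowMean (fun x => c • g x) a ℓ = c • windowMean g a ℓ := by
  rw [windowMean, windowMean, intervalIntegral.integral_smul, smul_comm]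

lemma windowMean_comp_add_right (g : ℝ → B) (a ℓ c : ℝ) :
    windowMean (fun x => g (x + c)) a ℓ = windowMean g (a + c) ℓ := by
  simp only [windowMean, intervalIntegral.integral_comp_add_right, add_right_comm]

lemma windowMean_eq_integral_add (g : ℝ → B) (a ℓ : ℝ) :
    windowMean g a ℓ = ℓ⁻¹ • ∫ y in 0..ℓ, g (a + y) := by
  rw [windowMean, intervalIntegral.integral_comp_add_left, add_zero]

lemma dist_windowMean_le {g g' : ℝ → B} {a ℓ η : ℝ} (hℓ : 0 < ℓ)
    (hg : IntervalIntegrable g volume a (a + ℓ)) (hg' : IntervalIntegrable g' volume a (a + ℓ))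
    (h : ∀ x ∈ Ioc a (a + ℓ), dist (g x) (g' x) ≤ η) :
    dist (windowMean g a ℓ) (windowMean g' a ℓ) ≤ η := by
  have hint : ‖∫ x in a..a + ℓ, (g x - g' x)‖ ≤ η * |a + ℓ - a| :=
    intervalIntegral.norm_integral_le_of_norm_le_const fun x hx => by
      rw [← dist_eq_norm]
      exact h x (by rwa [uIoc_of_le (by linarith)] at hx)
  rw [dist_eq_norm, windowMean, windowMean, ← smul_sub, ← intervalIntegral.integral_sub hg hg',
    norm_smul, Real.norm_of_nonneg (inv_nonneg.2 hℓ.le)]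
  rw [add_sub_cancel_left, abs_of_pos hℓ] at hint
  calc ℓ⁻¹ * ‖∫ x in a..a + ℓ, (g x - g' x)‖ ≤ ℓ⁻¹ * (η * ℓ) := by gcongr
    _ = η := by field_simp

lemma dist_windowMean_const_le [CompleteSpace B] {g : ℝ → B} {c : B} {a ℓ η : ℝ} (hℓ : 0 < ℓ)
    (hg : IntervalIntegrable g volume a (a + ℓ)) (h : ∀ x ∈ Ioc a (a + ℓ), dist (g x) c ≤ η) :
    dist (windowMean g a ℓ) c ≤ η := by
  simpa [windowMean_const c a hℓ.ne'] using dist_windowMean_le hℓ hg intervalIntegrable_const h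

lemma dist_windowMean_windowMean_le (u : ℝ →ᵇ B) (a b : ℝ) {ℓ : ℝ} (hℓ : 0 < ℓ) :
    dist (windowMean u a ℓ) (windowMean u b ℓ) ≤ 2 * |a - b| * ‖u‖ / ℓ := by
  have hint : ∀ c d : ℝ, IntervalIntegrable u volume c d :=
    fun c d => u.continuous.intervalIntegrable c d
  have hbound : ∀ c d : ℝ, ‖∫ x in c..d, u x‖ ≤ ‖u‖ * |d - c| :=
    fun c d => intervalIntegral.norm_integral_le_of_norm_le_const fun x _ => u.norm_coe_le_norm x
  rw [dist_eq_norm, windowMean, windowMean, ← smul_sub,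
    intervalIntegral.integral_interval_sub_interval_comm (hint _ _) (hint _ _) (hint _ _),
    norm_smul, Real.norm_of_nonneg (inv_nonneg.2 hℓ.le)]
  calc ℓ⁻¹ * ‖(∫ x in a..b, u x) - ∫ x in a + ℓ..b + ℓ, u x‖
      ≤ ℓ⁻¹ * (‖u‖ * |b - a| + ‖u‖ * |b + ℓ - (a + ℓ)|) := by
        gcongr
        exact (norm_sub_le _ _).trans (add_le_add (hbound _ _) (hbound _ _))
    _ = 2 * |a - b| * ‖u‖ / ℓ := by
        rw [add_sub_add_right_eq_sub, abs_sub_comm]; field_simp; ring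

lemma dist_windowMean_add_le (u : ℝ →ᵇ B) (a τ : ℝ) {ℓ : ℝ} (hℓ : 0 < ℓ) :
    dist (windowMean u (a + τ) ℓ) (windowMean u a ℓ) ≤ dist (translateR u τ) u := by
  rw [← windowMean_comp_add_right]
  exact dist_windowMean_le hℓ ((translateR u τ).continuous.intervalIntegrable _ _)
    (u.continuous.intervalIntegrable _ _)
    fun x _ => dist_coe_le_dist (f := translateR u τ) x

lemma IsAP.exists_dist_windowMean_le {u : ℝ →ᵇ B} (hu : IsAP u) {ε : ℝ} (hε : 0 < ε) :
    ∃ L, ∀ a b ℓ : ℝ, 0 < ℓ →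
      dist (windowMean u a ℓ) (windowMean u b ℓ) ≤ ε + 2 * L * ‖u‖ / ℓ := by
  obtain ⟨L, hL⟩ := hu.exists_almostPeriod hε
  refine ⟨L, fun a b ℓ hℓ => ?_⟩
  obtain ⟨τ, hτ, hτu⟩ := hL (b - a)
  have hshift : |a + τ - b| ≤ L := abs_le.2 ⟨by linarith [hτ.1, hτ.2], by linarith [hτ.2]⟩
  calc dist (windowMean u a ℓ) (windowMean u b ℓ)
      ≤ dist (windowMean u (a + τ) ℓ) (windowMean u a ℓ)
        + dist (windowMean u (a + τ) ℓ) (windowMean u b ℓ) := dist_triangle_left _ _ _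
    _ ≤ ε + 2 * L * ‖u‖ / ℓ := by
        gcongr
        · exact (dist_windowMean_add_le u a τ hℓ).trans hτu.le
        · exact (dist_windowMean_windowMean_le u _ _ hℓ).trans (by gcongr)

lemma continuous_windowMean (u : ℝ →ᵇ B) (ℓ : ℝ) : Continuous fun a => windowMean u a ℓ := by
  simp_rw [windowMean_eq_integral_add]
  exact (intervalIntegral.continuous_parametric_intervalIntegral_of_continuous'
    (by fun_prop) 0 ℓ).const_smul _

lemma windowMean_windowMean_comm (u : ℝ →ᵇ B) (S T : ℝ) :
    windowMean (fun a => windowMean u a T) 0 S = windowMean (fun b => windowMean u b S) 0 T := by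
  have hint : IntegrableOn (Function.uncurry fun x y => u (x + y)) (uIoc 0 S ×ˢ uIoc 0 T) :=
    ((by fun_prop : Continuous (Function.uncurry fun x y => u (x + y))).continuousOn
      |>.integrableOn_compact (isCompact_uIcc.prod isCompact_uIcc)).mono_set
        (prod_mono uIoc_subset_uIcc uIoc_subset_uIcc)
  simp only [windowMean_eq_integral_add, zero_add, intervalIntegral.integral_smul]
  rw [smul_comm, intervalIntegral_intervalIntegral_swap hint]
  simp only [add_comm]

lemma meanValueR_eq_of_tendsto {g : ℝ → B} {c : B}
    (h : Tendsto (fun T => windowMean g (-T) (2 * T)) atTop (𝓝 c)) : meanValueR g = c := by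
  refine (h.congr fun T => ?_).limUnder_eq
  rw [windowMean, neg_add_eq_sub, two_mul, add_sub_cancel_right]

end WindowMean

section Mean

variable [NormedSpace ℂ B] [CompleteSpace B]

/-- Both window means are close to the mean of `(a, b) ↦ u (a + b)` over `[0, S] × [0, T]`. -/
lemma dist_windowMean_zero_le {u : ℝ →ᵇ B} {η : ℝ → ℝ}
    (hη : ∀ a b ℓ : ℝ, 0 < ℓ → dist (windowMean u a ℓ) (windowMean u b ℓ) ≤ η ℓ)
    {S T : ℝ} (hS : 0 < S) (hT : 0 < T) :
    dist (windowMean u 0 T) (windowMean u 0 S) ≤ η T + η S := by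
  set I := windowMean (fun a => windowMean u a T) 0 S
  have hIT : dist I (windowMean u 0 T) ≤ η T :=
    dist_windowMean_const_le hS ((continuous_windowMean u T).intervalIntegrable _ _)
      fun a _ => hη a 0 T hT
  have hIS : dist I (windowMean u 0 S) ≤ η S := by
    rw [show I = _ from windowMean_windowMean_comm u S T]
    exact dist_windowMean_const_le hT ((continuous_windowMean u S).intervalIntegrable _ _)
      fun b _ => hη b 0 S hS
  exact (dist_triangle_left _ _ I).trans (add_le_add hIT hIS)

lemma IsAP.cauchySeq_windowMean {u : ℝ →ᵇ B} (hu : IsAP u) :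
    CauchySeq fun T => windowMean u 0 T := by
  refine Metric.cauchySeq_iff.2 fun ε hε => ?_
  obtain ⟨L, hL⟩ := hu.exists_dist_windowMean_le (show 0 < ε / 4 by positivity)
  obtain ⟨N, hN⟩ := eventually_atTop.1 ((eventually_gt_atTop 0).and
    (((tendsto_const_nhds (x := 2 * L * ‖u‖)).div_atTop tendsto_id).eventually
      (gt_mem_nhds (show 0 < ε / 4 by positivity))))
  refine ⟨N, fun m hm n hn => ?_⟩
  simp only [id] at hN
  have := dist_windowMean_zero_le hL (hN n hn).1 (hN m hm).1
  linarith [(hN m hm).2, (hN n hn).2]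

theorem IsAP.tendsto_windowMean {u : ℝ →ᵇ B} (hu : IsAP u) {a ℓ : ℝ → ℝ}
    (hℓ : Tendsto ℓ atTop atTop) :
    Tendsto (fun T => windowMean u (a T) (ℓ T)) atTop (𝓝 (meanValueR u)) := by
  obtain ⟨c, hc⟩ := cauchySeq_tendsto_of_complete hu.cauchySeq_windowMean
  have key : ∀ {a ℓ : ℝ → ℝ}, Tendsto ℓ atTop atTop →
      Tendsto (fun T => windowMean u (a T) (ℓ T)) atTop (𝓝 c) := by
    intro a ℓ hℓ
    refine Metric.tendsto_nhds.2 fun ε hε => ?_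
    obtain ⟨L, hL⟩ := hu.exists_dist_windowMean_le (show 0 < ε / 3 by positivity)
    filter_upwards [hℓ.eventually_gt_atTop 0,
      Metric.tendsto_nhds.1 (hc.comp hℓ) (ε / 3) (by positivity),
      ((tendsto_const_nhds (x := 2 * L * ‖u‖)).div_atTop hℓ).eventually
        (gt_mem_nhds (show 0 < ε / 3 by positivity))] with T hT hcT hLT
    have := hL (a T) 0 (ℓ T) hT
    calc dist (windowMean u (a T) (ℓ T)) c
        ≤ dist (windowMean u (a T) (ℓ T)) (windowMean u 0 (ℓ T))
          + dist (windowMean u 0 (ℓ T)) c := dist_triangle _ _ _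
      _ < ε := by simp only [Function.comp_apply] at hcT; linarith
  rw [meanValueR_eq_of_tendsto (key (tendsto_id.const_mul_atTop two_pos))]
  exact key hℓ

lemma tendsto_windowMean_atBot {ψ : ℝ → B} {v : ℝ →ᵇ B} (hv : IsAP v)
    (hψ : ∀ a b, IntervalIntegrable ψ volume a b)
    (hlim : Tendsto (fun t => dist (ψ t) (v t)) atBot (𝓝 0)) :
    Tendsto (fun T => windowMean ψ (-2 * T) T) atTop (𝓝 (meanValueR v)) := by
  refine tendsto_of_tendsto_of_dist (hv.tendsto_windowMean (a := fun T => -2 * T) tendsto_id)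
    (tendsto_order.2 ⟨fun a ha => .of_forall fun T => ha.trans_le dist_nonneg, fun ε hε => ?_⟩)
  obtain ⟨d, hd⟩ := eventually_atBot.1 (hlim.eventually (gt_mem_nhds (half_pos hε)))
  filter_upwards [eventually_gt_atTop 0, eventually_ge_atTop (-d)] with T hT hdT
  refine lt_of_le_of_lt (dist_windowMean_le hT (v.continuous.intervalIntegrable _ _) (hψ _ _)
    fun x hx => ?_) (half_lt_self hε)
  have hxT : x ≤ -2 * T + T := hx.2
  rw [dist_comm]
  exact (hd x (by linarith)).le

end Mean

section Bohr

lemma norm_exp_neg_I_mul (lam x : ℝ) : ‖Complex.exp (-(Complex.I * lam * x))‖ = 1 := by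
  rw [Complex.norm_exp]; simp

def bohrChar (lam : ℝ) : ℝ →ᵇ ℂ :=
  ofNormedAddCommGroup (fun x => Complex.exp (-(Complex.I * lam * x))) (by fun_prop) 1
    fun x => (norm_exp_neg_I_mul lam x).le

@[simp] lemma bohrChar_apply (lam x : ℝ) :
    bohrChar lam x = Complex.exp (-(Complex.I * lam * x)) := rfl

variable [NormedSpace ℂ B]

@[simp] lemma bohrChar_smul_apply (lam : ℝ) (u : ℝ →ᵇ B) (x : ℝ) :
    (bohrChar lam • u) x = Complex.exp (-(Complex.I * lam * x)) • u x := rfl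

lemma translateR_bohrChar_smul (lam τ : ℝ) (u : ℝ →ᵇ B) :
    translateR (bohrChar lam • u) τ = bohrChar lam τ • (bohrChar lam • translateR u τ) := by
  ext x
  simp only [translateR_apply, bohrChar_smul_apply, BoundedContinuousFunction.coe_smul,
    bohrChar_apply, smul_smul, ← Complex.exp_add]
  push_cast; ring_nf

lemma IsAP.bohrChar_smul {u : ℝ →ᵇ B} (hu : IsAP u) (lam : ℝ) : IsAP (bohrChar lam • u) :=
  .of_forall_mem (((isCompact_sphere (0 : ℂ) 1).prod hu).image
    (by fun_prop : Continuous fun p : ℂ × (ℝ →ᵇ B) => p.1 • (bohrChar lam • p.2))) fun τ =>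
      ⟨(bohrChar lam τ, translateR u τ), ⟨by simp [norm_exp_neg_I_mul], translateR_mem_closure τ⟩,
        (translateR_bohrChar_smul lam τ u).symm⟩

variable [CompleteSpace B]

lemma IsAP.dist_meanValueR_le {u v : ℝ →ᵇ B} (hu : IsAP u) (hv : IsAP v) :
    dist (meanValueR u) (meanValueR v) ≤ dist u v := by
  have hℓ : Tendsto (fun T : ℝ => 2 * T) atTop atTop := tendsto_id.const_mul_atTop two_pos
  refine le_of_tendsto ((hu.tendsto_windowMean (a := fun T => -T) hℓ).dist
    (hv.tendsto_windowMean (a := fun T => -T) hℓ)) ?_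
  filter_upwards [eventually_gt_atTop 0] with T hT
  exact dist_windowMean_le (by positivity) (u.continuous.intervalIntegrable _ _)
    (v.continuous.intervalIntegrable _ _) fun x _ => dist_coe_le_dist x

lemma IsAP.dist_bohrCoeffR_le {u v : ℝ →ᵇ B} (hu : IsAP u) (hv : IsAP v) (lam : ℝ) :
    dist (bohrCoeffR u lam) (bohrCoeffR v lam) ≤ dist u v := by
  refine ((hu.bohrChar_smul lam).dist_meanValueR_le (hv.bohrChar_smul lam)).trans
    ((dist_le dist_nonneg).2 fun x => ?_)
  simpa [dist_smul₀, norm_exp_neg_I_mul] using dist_coe_le_dist x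

lemma IsAP.bohrCoeffR_translateR {u : ℝ →ᵇ B} (hu : IsAP u) (c lam : ℝ) :
    bohrCoeffR (translateR u c) lam = Complex.exp (Complex.I * lam * c) • bohrCoeffR u lam := by
  refine meanValueR_eq_of_tendsto ((((hu.bohrChar_smul lam).tendsto_windowMean
    (a := fun T => -T + c) (tendsto_id.const_mul_atTop two_pos)).const_smul
      (Complex.exp (Complex.I * lam * c))).congr fun T => ?_)
  rw [← windowMean_const_smul, ← windowMean_comp_add_right]
  congr 1; ext x
  simp only [bohrChar_smul_apply, translateR_apply, smul_smul, ← Complex.exp_add]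
  push_cast; ring_nf

lemma IsAP.apSpec_translateR {u : ℝ →ᵇ B} (hu : IsAP u) (c : ℝ) :
    apSpec (translateR u c) = apSpec u := by
  ext lam
  simp [apSpec, hu.bohrCoeffR_translateR, Complex.exp_ne_zero]

lemma IsAP.apSpec_subset_of_forall_approx {h : ℝ →ᵇ B} (hh : IsAP h) {Γ : Set ℝ}
    (happrox : ∀ ε > 0, ∃ g : ℝ →ᵇ B, IsAP g ∧ apSpec g ⊆ Γ ∧
      ∀ᶠ t in atBot, dist (h t) (g t) ≤ ε) :
    apSpec h ⊆ Γ := by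
  intro lam hlam
  by_contra hΓ
  suffices h0 : dist (bohrCoeffR h lam) 0 ≤ 0 from hlam (dist_le_zero.1 h0)
  refine le_of_forall_pos_le_add fun ε hε => ?_
  obtain ⟨g, hg, hgΓ, hhg⟩ := happrox ε hε
  have hg0 : bohrCoeffR g lam = 0 := not_not.1 fun hne => hΓ (hgΓ hne)
  calc dist (bohrCoeffR h lam) 0 = dist (bohrCoeffR h lam) (bohrCoeffR g lam) := by rw [hg0]
    _ ≤ dist h g := hh.dist_bohrCoeffR_le hg lam
    _ ≤ 0 + ε := by rw [zero_add]; exact hh.dist_le_of_eventually hg hhg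

end Bohr

section Discontinuities

/-- For each `ε`, the points near which `φ` is not `ε`-close to a function continuous there form
a discrete set. -/
theorem countable_setOf_not_continuousAt {X Y : Type*} [TopologicalSpace X]
    [SecondCountableTopology X] [PseudoMetricSpace Y] {φ : X → Y}
    (h : ∀ ε > 0, ∀ x, ∀ᶠ y in 𝓝[≠] x, ∃ ψ : X → Y, ContinuousAt ψ y ∧
      ∀ᶠ z in 𝓝 y, dist (φ z) (ψ z) ≤ ε) :
    {x | ¬ContinuousAt φ x}.Countable := by
  set Good : ℝ → X → Prop := fun ε y => ∃ ψ : X → Y, ContinuousAt ψ y ∧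
    ∀ᶠ z in 𝓝 y, dist (φ z) (ψ z) ≤ ε
  have hcont : ∀ x, (∀ n : ℕ, Good (1 / (n + 1)) x) → ContinuousAt φ x := by
    intro x hx
    refine Metric.tendsto_nhds.2 fun ε hε => ?_
    obtain ⟨n, hn⟩ := exists_nat_one_div_lt (show 0 < ε / 3 by positivity)
    obtain ⟨ψ, hψ, hφψ⟩ := hx n
    filter_upwards [hφψ, Metric.tendsto_nhds.1 hψ (ε / 3) (by positivity)] with z hz hψz
    calc dist (φ z) (φ x) ≤ dist (φ z) (ψ z) + dist (ψ z) (ψ x) + dist (ψ x) (φ x) :=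
          dist_triangle4 _ _ _ _
      _ < ε := by linarith [dist_comm (ψ x) (φ x), hφψ.self_of_nhds]
  have hdiscrete : ∀ ε > 0, IsDiscrete {x | ¬Good ε x} := fun ε hε =>
    IsDiscrete.of_nhdsWithin fun x _ => le_pure_iff.2 (by
      filter_upwards [nhdsWithin_le_nhds (eventually_nhdsWithin_iff.1 (h ε hε x)),
        self_mem_nhdsWithin] with y hy hbad
      exact by_contra fun hne => hbad (hy hne))
  refine (countable_iUnion fun n : ℕ =>
    (HereditarilyLindelofSpace.isLindelof _).countable_of_isDiscrete
      (hdiscrete (1 / (n + 1)) (by positivity))).mono fun x hx => ?_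
  by_contra hx'
  simp only [mem_iUnion, mem_ofPred_eq, not_exists, not_not] at hx'
  exact hx (hcont x hx')

theorem aestronglyMeasurable_of_countable_setOf_not_continuousAt {X Y : Type*}
    [TopologicalSpace X] [MeasurableSpace X] [OpensMeasurableSpace X] [MeasurableSingletonClass X]
    [TopologicalSpace Y] [TopologicalSpace.PseudoMetrizableSpace Y]
    [SecondCountableTopologyEither X Y]
    {μ : Measure X} [NullSingletonClass μ] {φ : X → Y} (h : {x | ¬ContinuousAt φ x}.Countable) :
    AEStronglyMeasurable φ μ := by
  rw [← Measure.restrict_eq_self_of_ae_mem (compl_mem_ae_iff.2 (h.measure_zero μ))]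
  exact ContinuousOn.aestronglyMeasurable (fun x hx => (not_not.1 hx).continuousWithinAt)
    h.measurableSet.compl

end Discontinuities

section Circle

def arcTrace {α : Type*} (f : circleSet → α) (s : circleSet) (k t : ℝ) : α :=
  f (arcPt s k (Real.exp t))

lemma arcPt_arcPt (s : circleSet) (k a κ x : ℝ) :
    arcPt (arcPt s k a) κ x = arcPt s 1 (k * a + κ * x) := by
  apply Subtype.ext
  simp only [arcPt, mul_assoc, ← Complex.exp_add]
  push_cast; ring_nf

lemma arcPt_eq_arcPt_one (s : circleSet) (k t : ℝ) : arcPt s k t = arcPt s 1 (k * t) := by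
  apply Subtype.ext
  simp [arcPt]

lemma arcTrace_add_log {α : Type*} {f : circleSet → α} {s : circleSet} {k δ : ℝ} (hδ : 0 < δ)
    (x : ℝ) :
    arcTrace f s k (x + Real.log δ) = f (arcPt s k (δ * Real.exp x)) := by
  rw [arcTrace, Real.exp_add, Real.exp_log hδ, mul_comm]

lemma eventually_dist_arcTrace_lt {f : circleSet → B} {s : circleSet} {k δ ε : ℝ} (hδ : 0 < δ)
    {g : ℝ →ᵇ B} (hg : ∀ x < 0, ‖f (arcPt s k (δ * Real.exp x)) - g x‖ < ε) :
    ∀ᶠ t in atBot, dist (arcTrace f s k t) (translateR g (-Real.log δ) t) < ε := by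
  filter_upwards [eventually_lt_atBot (Real.log δ)] with t ht
  have := hg (t - Real.log δ) (by linarith)
  rwa [← arcTrace_add_log (f := f) (s := s) hδ, sub_add_cancel, ← dist_eq_norm,
    sub_eq_add_neg] at this

lemma IsSAP.exists_approx {f : circleSet → B} (hf : IsSAP f) (s : circleSet) {ε : ℝ}
    (hε : 0 < ε) : ∃ δ > 0, ∀ k : ℝ, k = -1 ∨ k = 1 → ∃ g : ℝ →ᵇ B, IsAP g ∧
      ∀ x < 0, ‖f (arcPt s k (δ * Real.exp x)) - g x‖ < ε := by
  obtain ⟨δ, hδ, g₁, g₂, hg₁, hg₂, h₁, h₂⟩ := hf s ε hε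
  refine ⟨δ, hδ.1, ?_⟩
  rintro k (rfl | rfl)
  exacts [⟨g₁, hg₁, h₁⟩, ⟨g₂, hg₂, h₂⟩]

lemma IsSAP.countable_setOf_not_continuousAt_arcPt {f : circleSet → B} (hf : IsSAP f)
    (s : circleSet) : {θ | ¬ContinuousAt (fun θ => f (arcPt s 1 θ)) θ}.Countable := by
  refine countable_setOf_not_continuousAt fun ε hε θ₀ => ?_
  obtain ⟨δ, hδ, hg⟩ := hf.exists_approx (arcPt s 1 θ₀) hε
  filter_upwards [nhdsWithin_le_nhds (ball_mem_nhds θ₀ hδ), self_mem_nhdsWithin] with y hyb hne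
  obtain ⟨κ, hκ, hy⟩ : ∃ κ : ℝ, (κ = -1 ∨ κ = 1) ∧ κ * (y - θ₀) ∈ Ioo 0 δ := by
    have := abs_lt.1 (mem_ball_iff_norm.1 hyb)
    rcases lt_or_gt_of_ne hne with h | h
    · exact ⟨-1, Or.inl rfl, by constructor <;> linarith⟩
    · exact ⟨1, Or.inr rfl, by constructor <;> linarith⟩
  obtain ⟨g, -, hfg⟩ := hg κ hκ
  refine ⟨fun θ => g (Real.log (κ * (θ - θ₀) / δ)),
    g.continuous.continuousAt.comp (ContinuousAt.log (by fun_prop) (div_pos hy.1 hδ).ne'), ?_⟩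
  filter_upwards [(isOpen_Ioo.preimage (by fun_prop : Continuous fun θ => κ * (θ - θ₀))).mem_nhds
    hy] with θ hθ
  have hpos : 0 < κ * (θ - θ₀) / δ := div_pos hθ.1 hδ
  have hκκ : κ * κ = 1 := by rcases hκ with rfl | rfl <;> norm_num
  have := hfg _ (Real.log_neg hpos ((div_lt_one hδ).2 hθ.2))
  rw [Real.exp_log hpos, mul_div_cancel₀ _ hδ.ne', arcPt_arcPt, ← mul_assoc, hκκ, one_mul,
    one_mul, add_sub_cancel] at this
  exact (dist_eq_norm _ _).trans_le this.le

lemma IsSAP.aestronglyMeasurable_arcTrace {f : circleSet → B} (hf : IsSAP f) (s : circleSet)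
    {k : ℝ} (hk : k ≠ 0) : AEStronglyMeasurable (arcTrace f s k) volume := by
  have hcomp : arcTrace f s k = (fun θ => f (arcPt s 1 θ)) ∘ fun t => k * Real.exp t := by
    ext t; simp [arcTrace, arcPt_eq_arcPt_one s k]
  refine aestronglyMeasurable_of_countable_setOf_not_continuousAt
    (((hf.countable_setOf_not_continuousAt_arcPt s).preimage
      ((mul_right_injective₀ hk).comp Real.exp_injective)).mono ?_)
  intro t ht hcont
  rw [mem_ofPred_eq, hcomp] at ht
  exact ht (hcont.comp (by fun_prop))

lemma exists_arc_approx_of_tendsto {f : circleSet → B} {s : circleSet} {h₁ h₂ : ℝ →ᵇ B}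
    (hlim₁ : Tendsto (fun t => dist (arcTrace f s (-1) t) (h₁ t)) atBot (𝓝 0))
    (hlim₂ : Tendsto (fun t => dist (arcTrace f s 1 t) (h₂ t)) atBot (𝓝 0)) {ε : ℝ}
    (hε : 0 < ε) :
    ∃ δ ∈ Ioo 0 Real.pi,
      (∀ x < 0, ‖f (arcPt s (-1) (δ * Real.exp x)) - translateR h₁ (Real.log δ) x‖ < ε) ∧
      (∀ x < 0, ‖f (arcPt s 1 (δ * Real.exp x)) - translateR h₂ (Real.log δ) x‖ < ε) := by
  obtain ⟨d, hd⟩ := eventually_atBot.1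
    ((hlim₁.eventually (gt_mem_nhds hε)).and (hlim₂.eventually (gt_mem_nhds hε)))
  have hδ := Real.exp_pos (min d 0)
  refine ⟨_, ⟨hδ, (Real.exp_le_one_iff.2 (min_le_right d 0)).trans_lt
    (by linarith [Real.pi_gt_three])⟩, ?_⟩
  have hx : ∀ x < 0, x + Real.log (Real.exp (min d 0)) ≤ d := fun x hx => by
    rw [Real.log_exp]; linarith [min_le_left d 0]
  constructor <;> intro x hxneg <;>
    rw [← arcTrace_add_log (f := f) (s := s) hδ, translateR_apply, ← dist_eq_norm]
  exacts [(hd _ (hx x hxneg)).1, (hd _ (hx x hxneg)).2]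

variable [NormedSpace ℂ B] [CompleteSpace B]

lemma circBohr_eq_bohrCoeffR {f : circleSet → B} {s : circleSet} {k C : ℝ}
    (hmeas : AEStronglyMeasurable (arcTrace f s k) volume) (hC : ∀ z, ‖f z‖ ≤ C)
    {h : ℝ →ᵇ B} (hh : IsAP h)
    (hlim : Tendsto (fun t => dist (arcTrace f s k t) (h t)) atBot (𝓝 0)) (lam : ℝ) :
    circBohr f s k lam = bohrCoeffR h lam := by
  set ψ : ℝ → B := fun t => Complex.exp (-(Complex.I * lam * t)) • arcTrace f s k t
  have hψ : ∀ a b, IntervalIntegrable ψ volume a b := fun a b =>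
    (intervalIntegrable_const (c := C)).mono_fun'
      ((by fun_prop : Continuous fun t : ℝ => Complex.exp (-(Complex.I * lam * t)))
        |>.aestronglyMeasurable.smul hmeas).restrict
      (.of_forall fun t => by simp [ψ, norm_smul, norm_exp_neg_I_mul, arcTrace, hC])
  have hdist : ∀ t, dist (ψ t) ((bohrChar lam • h) t) = dist (arcTrace f s k t) (h t) :=
    fun t => by simp [ψ, dist_smul₀, norm_exp_neg_I_mul]
  refine ((tendsto_windowMean_atBot (hh.bohrChar_smul lam) hψ
    (by simpa only [hdist] using hlim)).congr fun T => ?_).limUnder_eq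
  rw [windowMean, show -2 * T + T = -T by ring]
  rfl

theorem IsSAP.exists_isAP_tendsto_arcTrace {f : circleSet → B} (hf : IsSAP f) {C : ℝ}
    (hC : ∀ z, ‖f z‖ ≤ C) (s : circleSet) {k : ℝ} (hk : k = -1 ∨ k = 1) :
    ∃ h : ℝ →ᵇ B, IsAP h ∧ Tendsto (fun t => dist (arcTrace f s k t) (h t)) atBot (𝓝 0) ∧
      sapSpec f s k = apSpec h := by
  obtain ⟨h, hh, hlim⟩ := exists_isAP_tendsto_dist_atBot fun ε hε => by
    obtain ⟨δ, hδ, hg⟩ := hf.exists_approx s hε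
    obtain ⟨g, hg, hfg⟩ := hg k hk
    exact ⟨_, hg.translate _, (eventually_dist_arcTrace_lt hδ hfg).mono fun _ => le_of_lt⟩
  have hmeas := hf.aestronglyMeasurable_arcTrace (k := k) s
    (by rcases hk with rfl | rfl <;> norm_num)
  refine ⟨h, hh, hlim, ?_⟩
  ext lam
  simp only [sapSpec, apSpec, mem_ofPred_eq, circBohr_eq_bohrCoeffR hmeas hC hh hlim]

lemma apSpec_subset_of_arc_approx {f : circleSet → B} {s : circleSet} {k : ℝ} {h : ℝ →ᵇ B}
    (hh : IsAP h) (hlim : Tendsto (fun t => dist (arcTrace f s k t) (h t)) atBot (𝓝 0))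
    {Γ : Set ℝ} (happrox : ∀ ε > 0, ∃ δ > 0, ∃ g : ℝ →ᵇ B, IsAP g ∧ apSpec g ⊆ Γ ∧
      ∀ x < 0, ‖f (arcPt s k (δ * Real.exp x)) - g x‖ < ε) :
    apSpec h ⊆ Γ :=
  hh.apSpec_subset_of_forall_approx fun ε hε => by
    obtain ⟨δ, hδ, g, hg, hgΓ, hfg⟩ := happrox (ε / 2) (half_pos hε)
    refine ⟨translateR g (-Real.log δ), hg.translate _, by rwa [hg.apSpec_translateR], ?_⟩
    filter_upwards [hlim.eventually (gt_mem_nhds (half_pos hε)),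
      eventually_dist_arcTrace_lt hδ hfg] with t h₁ h₂
    linarith [dist_triangle_left (h t) (translateR g (-Real.log δ) t) (arcTrace f s k t)]

end Circle

end SAP

open SAP in
theorem stmt3_general (S : Set ℂ)
    (Sig : ℂ → ℝ → Set ℝ)
    (f : LinfT) (hf : IsSAP ⇑f) :
    (∀ s : circleSet, (s : ℂ) ∈ S → ∀ k : ℝ, k = -1 ∨ k = 1 →
        sapSpec (⇑f) s k ⊆ Sig (s : ℂ) k)
      ↔
    (∀ s : circleSet, (s : ℂ) ∈ S → ∀ ε : ℝ, 0 < ε →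
      ∃ δ : ℝ, δ ∈ Set.Ioo (0 : ℝ) Real.pi ∧
      ∃ g₁ g₂ : ℝ →ᵇ ℂ, IsAP g₁ ∧ IsAP g₂ ∧
        apSpec (⇑g₁) ⊆ Sig (s : ℂ) (-1) ∧ apSpec (⇑g₂) ⊆ Sig (s : ℂ) 1 ∧
        (∀ x : ℝ, x < 0 → ‖f (arcPt s (-1) (δ * Real.exp x)) - g₁ x‖ < ε) ∧
        (∀ x : ℝ, x < 0 → ‖f (arcPt s 1 (δ * Real.exp x)) - g₂ x‖ < ε)) := by
  have apPart := fun s k (hk : k = -1 ∨ k = 1) =>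
    hf.exists_isAP_tendsto_arcTrace (fun z => lp.norm_apply_le_norm ENNReal.top_ne_zero f z) s hk
  constructor
  · intro hspec s hs ε hε
    obtain ⟨h₁, hh₁, hlim₁, hspec₁⟩ := apPart s (-1) (Or.inl rfl)
    obtain ⟨h₂, hh₂, hlim₂, hspec₂⟩ := apPart s 1 (Or.inr rfl)
    obtain ⟨δ, hδ, happrox₁, happrox₂⟩ := exists_arc_approx_of_tendsto hlim₁ hlim₂ hε
    refine ⟨δ, hδ, _, _, hh₁.translate _, hh₂.translate _, ?_, ?_, happrox₁, happrox₂⟩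
    · rw [hh₁.apSpec_translateR, ← hspec₁]
      exact hspec s hs _ (Or.inl rfl)
    · rw [hh₂.apSpec_translateR, ← hspec₂]
      exact hspec s hs _ (Or.inr rfl)
  · intro happrox s hs k hk
    obtain ⟨h, hh, hlim, hspec⟩ := apPart s k hk
    rw [hspec]
    refine apSpec_subset_of_arc_approx hh hlim fun ε hε => ?_
    obtain ⟨δ, hδ, g₁, g₂, hg₁, hg₂, hΓ₁, hΓ₂, happrox₁, happrox₂⟩ := happrox s hs ε hε
    rcases hk with rfl | rfl
    exacts [⟨δ, hδ.1, g₁, hg₁, hΓ₁, happrox₁⟩, ⟨δ, hδ.1, g₂, hg₂, hΓ₂, happrox₂⟩]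

open SAP in
theorem stmt3 (S : Set ℂ) (hScirc : S ⊆ circleSet) (hScl : IsClosed S)
    (Sig : ℂ → ℝ → Set ℝ)
    (hSig : ∀ s ∈ S, ∀ k : ℝ, k = -1 ∨ k = 1 → IsUnitalSemigroup (Sig s k))
    (f : LinfT) (hf : IsSAP ⇑f)
    (hfc : ContinuousOn (⇑f) {z : circleSet | (z : ℂ) ∉ S}) :
    (∀ s : circleSet, (s : ℂ) ∈ S → ∀ k : ℝ, k = -1 ∨ k = 1 →
        sapSpec (⇑f) s k ⊆ Sig (s : ℂ) k)
      ↔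
    (∀ s : circleSet, (s : ℂ) ∈ S → ∀ ε : ℝ, 0 < ε →
      ∃ δ : ℝ, δ ∈ Set.Ioo (0 : ℝ) Real.pi ∧
      ∃ g₁ g₂ : ℝ →ᵇ ℂ, IsAP g₁ ∧ IsAP g₂ ∧
        apSpec (⇑g₁) ⊆ Sig (s : ℂ) (-1) ∧ apSpec (⇑g₂) ⊆ Sig (s : ℂ) 1 ∧
        (∀ x : ℝ, x < 0 → ‖f (arcPt s (-1) (δ * Real.exp x)) - g₁ x‖ < ε) ∧
        (∀ x : ℝ, x < 0 → ‖f (arcPt s 1 (δ * Real.exp x)) - g₂ x‖ < ε)) :=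
  stmt3_general S Sig f hf
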